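/- arXiv:2506.06019 — 2 statements merged into one kernel-verified Lean document; each statement's English description precedes it below -/
import Mathlib

section
/- There exists a constant C > 0 such that for all integers M ≥ 2 and r ≥ 2, every initialization parameter s ∈ ℕ⁺, and both choices of inner-level mutation (local or global), the (1+1)-ENAS algorithm with one-bit outer-level mutation finds an optimal solution of the Mcc problem within expected runtime E[T] ≤ C·r·M·ln(rM). -/
/-!
Up to the factor `π`, the fitness gap `1 - F(x)` is the potential
`g(x) = Ar_tri · (missing triangles) + Ar_seg · (missing segments + ε(x))`, because
`n (Ar_tri + Ar_seg) = π`. In every cell three specific mutations (add an `A` block, add a `C`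
block and, in the last cell, move a `B` block to `C`) are accepted and together remove at least
`1/(2r)` of that cell's share of `g`; the one-bit operator performs each of them with probability
at least `1/(54 (M - 1))`. Hence `E[g(x_{t+1})] ≤ (1 - δ) g(x_t)` with `δ = 1/(108 r (M - 1))`.
Since `g ≤ π` everywhere and `g ≥ Ar_seg ≥ π/n³` off the optimum, the multiplicative drift
theorem gives `E[T] ≤ ⌈ln(n³)/δ⌉ + 1/δ = O(r M ln(r M))`.
-/

open scoped ENNReal

namespace ENAS

/-- A cell: counts of A-, B-, C-type blocks, indexed by `Fin 3` (`0` = A, `1` = B, `2` = C). -/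
abbrev Cell : Type := Fin 3 → ℕ

/-- A solution with `K + 1` cells (i.e. for the `Mcc` problem with `M = K + 2` classes). -/
abbrev Solution (K : ℕ) : Type := Fin (K + 1) → Cell

/-- `I^m(x)`: the number of correctly formed triangle-shaped regions of a cell. -/
def Iterm (r : ℕ) (c : Cell) : ℕ := min (c 1 + c 2) (2 * r)

/-- `J^m(x)`: the number of correctly formed segment-shaped regions of a cell. -/
def Jterm (r : ℕ) (c : Cell) : ℕ := min (c 1) r + min (c 0) (r + (r - c 1))

/-- `ε(x)`: the number of misclassified segments of class `M`, computed in the integers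
from the data of the last cell. -/
def eps (r : ℕ) (c : Cell) : ℤ := max 0 (min ((c 1 : ℤ) - (r : ℤ)) ((r : ℤ) - (c 2 : ℤ)))

/-- `𝕀(x)`. -/
def Ival {K : ℕ} (r : ℕ) (x : Solution K) : ℕ := ∑ m, Iterm r (x m)

/-- `𝕁(x)`. -/
def Jval {K : ℕ} (r : ℕ) (x : Solution K) : ℕ := ∑ m, Jterm r (x m)

/-- The fitness `F(x)` of a solution for the `Mcc` problem with `M = K + 2` classes and
parameter `r`, where `n = 2 r M`, `Ar_tri = (1/2)·sin(2π/n)`, `Ar_seg = π/n − (1/2)·sin(2π/n)`,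
and `F(x) = (Ar_tri·(𝕀(x) + 2r) + Ar_seg·(𝕁(x) + 2r − ε(x)))/π`. -/
noncomputable def fitness {K : ℕ} (r : ℕ) (x : Solution K) : ℝ :=
  let n : ℕ := 2 * r * (K + 2)
  let ArTri : ℝ := (1 / 2) * Real.sin (2 * Real.pi / n)
  let ArSeg : ℝ := Real.pi / n - (1 / 2) * Real.sin (2 * Real.pi / n)
  (ArTri * ((Ival r x : ℝ) + 2 * r)
      + ArSeg * ((Jval r x : ℝ) + 2 * r - (eps r (x (Fin.last K)) : ℝ))) / Real.pi

/-- A pi-type of PMFs: sample each coordinate independently. -/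
noncomputable def pmfPi {α : Type} : ∀ (n : ℕ), (Fin n → PMF α) → PMF (Fin n → α)
  | 0, _ => PMF.pure (fun i => i.elim0)
  | n + 1, p =>
      (p 0).bind fun a => (pmfPi n (fun i => p i.succ)).bind fun f => PMF.pure (Fin.cons a f)

/-- One application of the mutation operation (Definition 1) to a cell: choose a block type `V`
uniformly at random, then uniformly at random perform Addition, Deletion, or Modification. -/
noncomputable def mutateCellOnce (c : Cell) : PMF Cell :=
  (PMF.uniformOfFintype (Fin 3)).bind fun V =>
    (PMF.uniformOfFintype (Fin 3)).bind fun op =>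
      if op = 0 then
        -- Addition
        PMF.pure (Function.update c V (c V + 1))
      else if op = 1 then
        -- Deletion
        PMF.pure (if 0 < c V then Function.update c V (c V - 1) else c)
      else
        -- Modification
        (PMF.uniformOfFinset (Finset.univ.erase V) (by
            rw [← Finset.card_pos, Finset.card_erase_of_mem (Finset.mem_univ _)]
            simp)).bind fun W =>
          PMF.pure
            (if 0 < c V then
              Function.update (Function.update c V (c V - 1)) W (c W + 1)
            else c)

/-- `k` consecutive applications of the mutation operation to a cell. -/
noncomputable def mutateCellTimes : ℕ → Cell → PMF Cell
  | 0, c => PMF.pure c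
  | k + 1, c => (mutateCellOnce c).bind (mutateCellTimes k)

/-- Inner-level mutation on a selected cell: local (`inner = false`) applies the mutation
operation once; global (`inner = true`) applies it `K` consecutive times with `K ~ Pois(1)`. -/
noncomputable def innerMutate (inner : Bool) (c : Cell) : PMF Cell :=
  if inner then (ProbabilityTheory.poissonPMF 1).bind fun k => mutateCellTimes k c
  else mutateCellOnce c

/-- One-bit outer-level mutation: select exactly one of the `K + 1` cells uniformly at random
and apply the inner-level mutation to it. -/
noncomputable def offspringOneBit {K : ℕ} (inner : Bool) (x : Solution K) : PMF (Solution K) :=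
  (PMF.uniformOfFintype (Fin (K + 1))).bind fun m =>
    (innerMutate inner (x m)).bind fun c => PMF.pure (Function.update x m c)

/-- Bit-wise outer-level mutation: independently for each of the `K + 1` cells, with
probability `1/(K + 1)` apply the inner-level mutation to it, otherwise keep it. -/
noncomputable def offspringBitWise {K : ℕ} (inner : Bool) (x : Solution K) : PMF (Solution K) :=
  pmfPi (K + 1) fun m =>
    (PMF.bernoulli ((K + 1 : ℕ) : NNReal)⁻¹
        (inv_le_one_of_one_le₀ (by exact_mod_cast Nat.one_le_iff_ne_zero.mpr (Nat.succ_ne_zero K)))).bind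
      fun b => if b then innerMutate inner (x m) else PMF.pure (x m)

open scoped Classical in
/-- One generation of the (1+1)-ENAS algorithm: generate an offspring `y` from `x` by the
mutation operator `off` and accept it iff `F(y) ≥ F(x)` (ties prefer the offspring). -/
noncomputable def step {K : ℕ} (r : ℕ) (off : Solution K → PMF (Solution K)) (x : Solution K) :
    PMF (Solution K) :=
  (off x).map fun y => if fitness r x ≤ fitness r y then y else x

/-- The initial solution: all `3 (K + 1)` block counts are drawn independently and uniformly
from `{1, …, s}`. -/
noncomputable def initPMF (K s : ℕ) (hs : 1 ≤ s) : PMF (Solution K) :=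
  pmfPi (K + 1) fun _ =>
    pmfPi 3 fun _ => PMF.uniformOfFinset (Finset.Icc 1 s) (Finset.nonempty_Icc.mpr hs)

/-- The distribution of the solution `x_t` maintained by the (1+1)-ENAS algorithm after `t`
generations, starting from the initial distribution `init`. -/
noncomputable def solutionDist {K : ℕ} (r : ℕ) (off : Solution K → PMF (Solution K))
    (init : PMF (Solution K)) : ℕ → PMF (Solution K)
  | 0 => init
  | t + 1 => (solutionDist r off init t).bind (step r off)

open scoped Classical in
/-- The expected runtime `E[T]` of the (1+1)-ENAS algorithm: since the set of optimal
solutions (those with `F(x) = 1`) is absorbing, `E[T] = ∑_{t ≥ 0} Pr[F(x_t) ≠ 1]`. -/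
noncomputable def expectedRuntime {K : ℕ} (r : ℕ) (off : Solution K → PMF (Solution K))
    (init : PMF (Solution K)) : ℝ≥0∞ :=
  ∑' t : ℕ, ∑' x : Solution K, if fitness r x = 1 then 0 else solutionDist r off init t x

end ENAS

open Real

namespace PMF
variable {α β : Type*}

theorem tsum_bind_mul (p : PMF α) (q : α → PMF β) (φ : β → ℝ≥0∞) :
    ∑' b, p.bind q b * φ b = ∑' a, p a * ∑' b, q a b * φ b := by
  simp only [bind_apply, ← ENNReal.tsum_mul_right, ← ENNReal.tsum_mul_left, mul_assoc]
  exact ENNReal.tsum_comm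

theorem tsum_pure_mul (a : α) (φ : α → ℝ≥0∞) : ∑' b, pure a b * φ b = φ a := by
  simp [pure_apply]

theorem tsum_map_mul (f : α → β) (p : PMF α) (φ : β → ℝ≥0∞) :
    ∑' b, p.map f b * φ b = ∑' a, p a * φ (f a) := by
  simp only [map, tsum_bind_mul, Function.comp_apply, tsum_pure_mul]

theorem tsum_mul_le_sub_of_le_tsum_mul_sub {p : PMF α} {h : α → ℝ≥0∞} {G D : ℝ≥0∞} (hG : G ≠ ∞)
    (hh : ∀ a, h a ≤ G) (hD : D ≤ ∑' a, p a * (G - h a)) : ∑' a, p a * h a ≤ G - D := by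
  have hsum : ∑' a, p a * h a + ∑' a, p a * (G - h a) = G := by
    rw [← ENNReal.tsum_add]
    simp only [← mul_add, add_tsub_cancel_of_le (hh _), ENNReal.tsum_mul_right, tsum_coe, one_mul]
  have hD' : D ≤ G := hD.trans (le_add_self.trans hsum.le)
  refine ENNReal.le_sub_of_add_le_right (ne_top_of_le_ne_top hG hD') ?_
  calc ∑' a, p a * h a + D ≤ ∑' a, p a * h a + ∑' a, p a * (G - h a) := by gcongr
    _ = G := hsum

open scoped Classical in
theorem tsum_ite_le_inv_mul_tsum_mul (p : PMF α) (S : α → Prop) {g : α → ℝ} {b : ℝ}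
    (hb : 0 < b) (hg : ∀ a, ¬ S a → b ≤ g a) :
    ∑' a, (if S a then 0 else p a) ≤ (ENNReal.ofReal b)⁻¹ * ∑' a, p a * ENNReal.ofReal (g a) := by
  rw [← ENNReal.tsum_mul_left]
  refine ENNReal.tsum_le_tsum fun a => ?_
  split_ifs with ha
  · exact zero_le
  · calc p a = (ENNReal.ofReal b)⁻¹ * (ENNReal.ofReal b * p a) := by
          rw [← mul_assoc, ENNReal.inv_mul_cancel (by simpa using hb) ENNReal.ofReal_ne_top,
            one_mul]
      _ ≤ (ENNReal.ofReal b)⁻¹ * (ENNReal.ofReal (g a) * p a) := by gcongr; exact hg a ha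
      _ = _ := by rw [mul_comm (ENNReal.ofReal (g a))]

end PMF

theorem ENNReal.tsum_le_add_inv_one_sub {f : ℕ → ℝ≥0∞} {c : ℝ≥0∞} (T : ℕ) (hf : ∀ t, f t ≤ 1)
    (htail : ∀ i, f (i + T) ≤ c ^ i) : ∑' t, f t ≤ T + (1 - c)⁻¹ := by
  rw [← ENNReal.summable.sum_add_tsum_nat_add' (k := T), ← ENNReal.tsum_geometric]
  gcongr with i
  · exact (Finset.sum_le_card_nsmul _ _ 1 fun t _ => hf t).trans (by simp)
  · exact htail i

theorem one_sub_pow_ceil_log_div_mul_le {δ a b : ℝ} (hδ : 0 < δ) (hδ1 : δ ≤ 1) (hb : 0 < b) :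
    (1 - δ) ^ ⌈log (a / b) / δ⌉₊ * a ≤ b := by
  rcases le_or_gt a 0 with ha | ha
  · exact (mul_nonpos_of_nonneg_of_nonpos (pow_nonneg (by linarith) _) ha).trans hb.le
  set T := ⌈log (a / b) / δ⌉₊
  have hT : log (a / b) ≤ δ * T := by
    rw [← div_le_iff₀' hδ]; exact Nat.le_ceil _
  have hpow : (1 - δ) ^ T ≤ b / a := calc
    (1 - δ) ^ T ≤ exp (-δ) ^ T := pow_le_pow_left₀ (by linarith) (one_sub_le_exp_neg δ) T
    _ = exp (-(δ * T)) := by rw [← exp_nat_mul]; ring_nf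
    _ ≤ exp (-log (a / b)) := exp_le_exp.2 (by linarith)
    _ = b / a := by rw [exp_neg, exp_log (div_pos ha hb), inv_div]
  calc (1 - δ) ^ T * a ≤ b / a * a := by gcongr
    _ = b := div_mul_cancel₀ b ha.ne'

section MultiplicativeDrift

variable {α : Type*}

theorem tsum_mul_le_pow_mul_of_drift {P : α → PMF α} {d : ℕ → PMF α}
    (hd : ∀ t, d (t + 1) = (d t).bind P) {g : α → ℝ≥0∞} {c : ℝ≥0∞}
    (hdrift : ∀ x, ∑' y, P x y * g y ≤ c * g x) (t : ℕ) :
    ∑' x, d t x * g x ≤ c ^ t * ∑' x, d 0 x * g x := by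
  induction t with
  | zero => simp
  | succ t ih => calc
      ∑' x, d (t + 1) x * g x ≤ ∑' x, d t x * (c * g x) := by
        rw [hd, PMF.tsum_bind_mul]; gcongr with x; exact hdrift x
      _ = c * ∑' x, d t x * g x := by
        rw [← ENNReal.tsum_mul_left]; congr 1; ext x; ring
      _ ≤ c ^ (t + 1) * ∑' x, d 0 x * g x := by
        rw [pow_succ', mul_assoc]; gcongr

open scoped Classical in
theorem tsum_tsum_ite_le_of_multiplicative_drift {P : α → PMF α} {d : ℕ → PMF α}
    (hd : ∀ t, d (t + 1) = (d t).bind P) (S : α → Prop) {g : α → ℝ} {δ gmin gmax : ℝ}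
    (hδ : 0 < δ) (hδ1 : δ ≤ 1) (hgmin : 0 < gmin) (hg_le : ∀ x, g x ≤ gmax)
    (hg_ge : ∀ x, ¬ S x → gmin ≤ g x)
    (hdrift : ∀ x, ∑' y, P x y * ENNReal.ofReal (g y) ≤
      ENNReal.ofReal (1 - δ) * ENNReal.ofReal (g x)) :
    ∑' t, ∑' x, (if S x then 0 else d t x) ≤
      ⌈log (gmax / gmin) / δ⌉₊ + (ENNReal.ofReal δ)⁻¹ := by
  set T := ⌈log (gmax / gmin) / δ⌉₊
  have hrate : 1 - ENNReal.ofReal (1 - δ) = ENNReal.ofReal δ := by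
    rw [← ENNReal.ofReal_one, ← ENNReal.ofReal_sub _ (by linarith), sub_sub_cancel]
  rw [← hrate]
  refine ENNReal.tsum_le_add_inv_one_sub T (fun t => ?_) (fun i => ?_)
  · exact (ENNReal.tsum_le_tsum fun x => by split_ifs <;> simp).trans (PMF.tsum_coe (d t)).le
  have hinit : ∑' x, d 0 x * ENNReal.ofReal (g x) ≤ ENNReal.ofReal gmax := calc
    _ ≤ ∑' x, d 0 x * ENNReal.ofReal gmax := by gcongr with x; exact hg_le x
    _ = ENNReal.ofReal gmax := by rw [ENNReal.tsum_mul_right, PMF.tsum_coe, one_mul]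
  calc ∑' x, (if S x then 0 else d (i + T) x)
      ≤ (ENNReal.ofReal gmin)⁻¹ * ∑' x, d (i + T) x * ENNReal.ofReal (g x) :=
        PMF.tsum_ite_le_inv_mul_tsum_mul _ S hgmin hg_ge
    _ ≤ (ENNReal.ofReal gmin)⁻¹ * (ENNReal.ofReal (1 - δ) ^ (i + T) * ENNReal.ofReal gmax) := by
        gcongr
        exact (tsum_mul_le_pow_mul_of_drift hd hdrift _).trans (by gcongr)
    _ = ENNReal.ofReal ((1 - δ) ^ i * ((1 - δ) ^ T * gmax / gmin)) := by
        rw [← ENNReal.ofReal_pow (by linarith), ← ENNReal.ofReal_inv_of_pos hgmin,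
          ← ENNReal.ofReal_mul (by positivity), ← ENNReal.ofReal_mul (by positivity)]
        congr 1; rw [pow_add]; field_simp
    _ ≤ ENNReal.ofReal ((1 - δ) ^ i) := by
        refine ENNReal.ofReal_le_ofReal (mul_le_of_le_one_right (pow_nonneg (by linarith) i) ?_)
        exact (div_le_one hgmin).2 (one_sub_pow_ceil_log_div_mul_le hδ hδ1 hgmin)
    _ = ENNReal.ofReal (1 - δ) ^ i := ENNReal.ofReal_pow (by linarith) i

end MultiplicativeDrift

theorem Finset.sum_add_sum_tsub_eq {ι : Type*} [Fintype ι] {f : ι → ℕ} {N : ℕ}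
    (hf : ∀ i, f i ≤ N) : ∑ i, f i + ∑ i, (N - f i) = Fintype.card ι * N := by
  rw [← Finset.sum_add_distrib, Finset.sum_congr rfl fun i _ => Nat.add_sub_cancel' (hf i)]
  simp

theorem Finset.sum_comp_update_add {ι α M : Type*} [Fintype ι] [DecidableEq ι] [AddCommMonoid M]
    (f : ι → α) (F : α → M) (i : ι) (a : α) :
    ∑ j, F (Function.update f i a j) + F (f i) = ∑ j, F (f j) + F a := by
  have h : ∀ j, F (Function.update f i a j) = Function.update (fun k => F (f k)) i (F a) j :=
    Function.apply_update (fun _ => F) f i a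
  rw [Finset.sum_congr rfl fun j _ => h j, Finset.sum_update_of_mem (Finset.mem_univ i), add_assoc,
    Finset.sdiff_singleton_eq_erase, Finset.sum_erase_add _ _ (Finset.mem_univ i), add_comm]

theorem natCast_sub_one_add_div_le {d : ℕ} {N : ℝ} (hd : (d : ℝ) ≤ N) :
    ((d - 1 : ℕ) : ℝ) + d / N ≤ d := by
  rcases Nat.eq_zero_or_pos d with rfl | hd0
  · simp
  have hN : 0 < N := lt_of_lt_of_le (by exact_mod_cast hd0) hd
  rw [Nat.cast_sub hd0, Nat.cast_one]
  linarith [(div_le_one hN).2 hd]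

theorem inv_three_le_poissonPMF_one_one : (3 : ℝ≥0∞)⁻¹ ≤ ProbabilityTheory.poissonPMF 1 1 := by
  have h : ProbabilityTheory.poissonPMF 1 1 = ENNReal.ofReal (exp (-1)) := by
    change ENNReal.ofReal (ProbabilityTheory.poissonPMFReal 1 1) = _
    simp [ProbabilityTheory.poissonPMFReal]
  rw [h, ← ENNReal.ofReal_ofNat 3, ← ENNReal.ofReal_inv_of_pos (by norm_num), exp_neg]
  exact ENNReal.ofReal_le_ofReal (inv_anti₀ (exp_pos 1) (by linarith [exp_one_lt_d9]))

theorem Real.sin_le_sub_cube_div_eight {x : ℝ} (h0 : 0 ≤ x) (h1 : x ≤ 1) :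
    sin x ≤ x - x ^ 3 / 8 := by
  have h := (abs_le.1 (sin_bound (x := x) (by rwa [abs_of_nonneg h0]))).2
  rw [abs_of_nonneg h0] at h
  have : x ^ 5 ≤ x ^ 3 := pow_le_pow_of_le_one h0 h1 (by norm_num)
  nlinarith [pow_nonneg h0 3]

namespace ENAS

/- `Ar_tri` and `Ar_seg` as functions of `n`: the areas of one of the `n` triangles and of one of
the `n` circular segments into which a regular `n`-gon inscribed in the unit circle cuts the unit
disk, whence `n (Ar_tri + Ar_seg) = π`. -/
noncomputable def triArea (n : ℝ) : ℝ := 1 / 2 * sin (2 * π / n)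

noncomputable def segArea (n : ℝ) : ℝ := π / n - 1 / 2 * sin (2 * π / n)

theorem triArea_add_segArea (n : ℝ) : triArea n + segArea n = π / n := by
  rw [triArea, segArea]; ring

theorem segArea_eq (n : ℝ) : segArea n = (2 * π / n - sin (2 * π / n)) / 2 := by
  rw [segArea]; ring

theorem two_pi_div_le_one {n : ℝ} (hn : 8 ≤ n) : 2 * π / n ≤ 1 := by
  rw [div_le_one (by linarith)]; linarith [pi_lt_d2]

theorem segArea_pos {n : ℝ} (hn : 0 < n) : 0 < segArea n := by
  have := sin_lt (show 0 < 2 * π / n by positivity)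
  rw [segArea_eq]; linarith

theorem segArea_le_triArea {n : ℝ} (hn : 8 ≤ n) : segArea n ≤ triArea n := by
  have hθ1 := two_pi_div_le_one hn
  have hθ0 : 0 ≤ 2 * π / n := by have := pi_pos; positivity
  have := sin_ge_sub_cube hθ0
  rw [segArea_eq, triArea]
  nlinarith [pow_le_one₀ hθ0 hθ1 (n := 2)]

theorem pi_le_pow_three_mul_segArea {n : ℝ} (hn : 8 ≤ n) : π ≤ n ^ 3 * segArea n := by
  have hθ0 : 0 ≤ 2 * π / n := by have := pi_pos; positivity
  have hsin := sin_le_sub_cube_div_eight hθ0 (two_pi_div_le_one hn)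
  have hcube : n ^ 3 * (2 * π / n) ^ 3 = 8 * π ^ 3 := by field_simp; norm_num
  calc π ≤ π ^ 3 / 2 := by nlinarith [pi_gt_three, pi_pos, sq_nonneg π]
    _ = n ^ 3 * ((2 * π / n) ^ 3 / 16) := by rw [mul_div_assoc', hcube]; ring
    _ ≤ n ^ 3 * segArea n := by
        rw [segArea_eq]
        exact mul_le_mul_of_nonneg_left (by linarith) (by positivity)

variable {K r : ℕ}

noncomputable def sides (K r : ℕ) : ℝ := ((2 * r * (K + 2) : ℕ) : ℝ)

theorem sides_eq (K r : ℕ) : sides K r = 2 * r * (K + 2) := by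
  simp [sides]

theorem eight_le_sides (hr : 2 ≤ r) : 8 ≤ sides K r := by
  rw [sides_eq]
  nlinarith [(show (2 : ℝ) ≤ r by exact_mod_cast hr), (K.cast_nonneg : (0 : ℝ) ≤ K)]

theorem triArea_add_segArea_mul_sides (hr : 0 < r) :
    (triArea (sides K r) + segArea (sides K r)) * sides K r = π := by
  rw [triArea_add_segArea, div_mul_cancel₀ _ (by rw [sides_eq]; positivity)]

theorem segArea_sides_pos (hr : 2 ≤ r) : 0 < segArea (sides K r) :=
  segArea_pos (by linarith [eight_le_sides (K := K) hr])

theorem triArea_sides_pos (hr : 2 ≤ r) : 0 < triArea (sides K r) :=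
  (segArea_sides_pos hr).trans_le (segArea_le_triArea (eight_le_sides hr))

def triDeficit (r : ℕ) (c : Cell) : ℕ := 2 * r - Iterm r c

def segDeficit (r : ℕ) (c : Cell) : ℕ := 2 * r - Jterm r c

def misclassified (r : ℕ) (c : Cell) : ℕ := min (c 1 - r) (r - c 2)

theorem Jterm_le (r : ℕ) (c : Cell) : Jterm r c ≤ 2 * r := by
  simp only [Jterm]; omega

theorem misclassified_le (r : ℕ) (c : Cell) : misclassified r c ≤ r := by
  simp only [misclassified]; omega

theorem eps_eq_misclassified (r : ℕ) (c : Cell) : eps r c = misclassified r c := by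
  simp only [eps, misclassified]; omega

def triTotal (r : ℕ) (x : Solution K) : ℕ := ∑ m, triDeficit r (x m)

def segTotal (r : ℕ) (x : Solution K) : ℕ :=
  ∑ m, segDeficit r (x m) + misclassified r (x (Fin.last K))

noncomputable def potential (r : ℕ) (x : Solution K) : ℝ :=
  triArea (sides K r) * triTotal r x + segArea (sides K r) * segTotal r x

theorem Ival_add_triTotal (r : ℕ) (x : Solution K) :
    Ival r x + triTotal r x = (K + 1) * (2 * r) :=
  (Finset.sum_add_sum_tsub_eq fun m => min_le_right _ _).trans (by simp)

theorem Jval_add_sum_segDeficit (r : ℕ) (x : Solution K) :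
    Jval r x + ∑ m, segDeficit r (x m) = (K + 1) * (2 * r) :=
  (Finset.sum_add_sum_tsub_eq fun m => Jterm_le r (x m)).trans (by simp)

theorem fitness_eq (hr : 0 < r) (x : Solution K) : fitness r x = 1 - potential r x / π := by
  have hI : (Ival r x : ℝ) + triTotal r x = (K + 1) * (2 * r) := by
    exact_mod_cast Ival_add_triTotal r x
  have hJ : (Jval r x : ℝ) + ∑ m, (segDeficit r (x m) : ℝ) = (K + 1) * (2 * r) := by
    exact_mod_cast Jval_add_sum_segDeficit r x
  change (triArea (sides K r) * (Ival r x + 2 * r) + segArea (sides K r) *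
      (Jval r x + 2 * r - eps r (x (Fin.last K)))) / π = _
  rw [eps_eq_misclassified, potential, segTotal, eq_sub_iff_add_eq, ← add_div,
    div_eq_one_iff_eq pi_ne_zero]
  push_cast
  linear_combination triArea (sides K r) * hI + segArea (sides K r) * hJ +
    triArea_add_segArea_mul_sides (K := K) hr -
    (triArea (sides K r) + segArea (sides K r)) * sides_eq K r

theorem fitness_le_fitness_iff (hr : 0 < r) {x y : Solution K} :
    fitness r x ≤ fitness r y ↔ potential r y ≤ potential r x := by
  rw [fitness_eq hr, fitness_eq hr, sub_le_sub_iff_left, div_le_div_iff_of_pos_right pi_pos]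

theorem fitness_eq_one_iff (hr : 0 < r) {x : Solution K} : fitness r x = 1 ↔ potential r x = 0 := by
  rw [fitness_eq hr, sub_eq_self, div_eq_zero_iff, or_iff_left pi_ne_zero]

theorem potential_nonneg (hr : 2 ≤ r) (x : Solution K) : 0 ≤ potential r x := by
  have := segArea_sides_pos (K := K) hr
  have := triArea_sides_pos (K := K) hr
  rw [potential]; positivity

theorem potential_le_pi (hr : 2 ≤ r) (x : Solution K) : potential r x ≤ π := by
  have hT : triTotal r x ≤ 2 * r * (K + 2) := by nlinarith [Ival_add_triTotal r x]
  have hS : segTotal r x ≤ 2 * r * (K + 2) := by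
    unfold segTotal
    nlinarith [Jval_add_sum_segDeficit r x, misclassified_le r (x (Fin.last K))]
  have hT' : (triTotal r x : ℝ) ≤ sides K r := by unfold sides; exact_mod_cast hT
  have hS' : (segTotal r x : ℝ) ≤ sides K r := by unfold sides; exact_mod_cast hS
  rw [potential, ← triArea_add_segArea_mul_sides (K := K) (r := r) (by omega), add_mul]
  gcongr
  exacts [(triArea_sides_pos hr).le, (segArea_sides_pos hr).le]

theorem segArea_le_potential (hr : 2 ≤ r) {x : Solution K} (hx : potential r x ≠ 0) :
    segArea (sides K r) ≤ potential r x := by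
  have hseg := segArea_sides_pos (K := K) hr
  have htri := segArea_le_triArea (eight_le_sides (K := K) hr)
  rw [potential] at hx ⊢
  rcases Nat.eq_zero_or_pos (triTotal r x) with hT | hT
  · rcases Nat.eq_zero_or_pos (segTotal r x) with hS | hS
    · simp [hT, hS] at hx
    · have : (1 : ℝ) ≤ segTotal r x := by exact_mod_cast hS
      nlinarith [Nat.cast_nonneg (α := ℝ) (triTotal r x)]
  · have : (1 : ℝ) ≤ triTotal r x := by exact_mod_cast hT
    nlinarith [Nat.cast_nonneg (α := ℝ) (segTotal r x)]

def addA (c : Cell) : Cell := Function.update c 0 (c 0 + 1)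

def addC (c : Cell) : Cell := Function.update c 2 (c 2 + 1)

def moveBC (c : Cell) : Cell :=
  if 0 < c 1 then Function.update (Function.update c 1 (c 1 - 1)) 2 (c 2 + 1) else c

theorem deficits_addA (r : ℕ) (c : Cell) :
    triDeficit r (addA c) = triDeficit r c ∧ segDeficit r (addA c) = segDeficit r c - 1 ∧
      misclassified r (addA c) = misclassified r c := by
  simp only [addA, triDeficit, segDeficit, misclassified, Iterm, Jterm, Function.update_apply,
    Fin.isValue, Fin.reduceEq, one_ne_zero, reduceIte, true_and, and_true]
  omega

theorem deficits_addC (r : ℕ) (c : Cell) :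
    triDeficit r (addC c) = triDeficit r c - 1 ∧ segDeficit r (addC c) = segDeficit r c ∧
      misclassified r (addC c) ≤ misclassified r c := by
  simp only [addC, triDeficit, segDeficit, misclassified, Iterm, Jterm, Function.update_apply,
    Fin.isValue, Fin.reduceEq, reduceIte, true_and]
  omega

theorem deficits_moveBC {r : ℕ} {c : Cell} (hc : 0 < misclassified r c) :
    triDeficit r (moveBC c) = triDeficit r c ∧ segDeficit r (moveBC c) = segDeficit r c ∧
      misclassified r (moveBC c) = misclassified r c - 1 := by
  simp only [misclassified] at hc
  simp only [moveBC, if_pos (show 0 < c 1 by omega), triDeficit, segDeficit, misclassified, Iterm,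
    Jterm, Function.update_apply, Fin.reduceEq, reduceIte]
  omega

theorem misclassified_update_last_le {x : Solution K} {m : Fin (K + 1)} {c : Cell}
    (hc : misclassified r c ≤ misclassified r (x m)) :
    misclassified r (Function.update x m c (Fin.last K)) ≤ misclassified r (x (Fin.last K)) := by
  rw [Function.update_apply]
  split_ifs with hm
  · exact hm ▸ hc
  · exact le_rfl

theorem potential_update_add_le (hr : 2 ≤ r) (x : Solution K) (m : Fin (K + 1)) (c : Cell)
    {i j e : ℝ} (hi : (triDeficit r c : ℝ) + i ≤ triDeficit r (x m))
    (hj : (segDeficit r c : ℝ) + j ≤ segDeficit r (x m))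
    (he : (misclassified r (Function.update x m c (Fin.last K)) : ℝ) + e ≤
      misclassified r (x (Fin.last K))) :
    potential r (Function.update x m c) + (triArea (sides K r) * i + segArea (sides K r) * (j + e))
      ≤ potential r x := by
  have hT : (triTotal r (Function.update x m c) : ℝ) + triDeficit r (x m) =
      triTotal r x + triDeficit r c := by
    exact_mod_cast Finset.sum_comp_update_add x (triDeficit r) m c
  have hS : (∑ j, segDeficit r (Function.update x m c j) : ℝ) + segDeficit r (x m) =
      ∑ j, segDeficit r (x j) + segDeficit r c := by
    exact_mod_cast Finset.sum_comp_update_add x (segDeficit r) m c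
  have htri :
      triArea (sides K r) * i ≤ triArea (sides K r) * (triDeficit r (x m) - triDeficit r c) :=
    mul_le_mul_of_nonneg_left (by linarith) (triArea_sides_pos hr).le
  have hseg : segArea (sides K r) * (j + e) ≤ segArea (sides K r) * (segDeficit r (x m) -
      segDeficit r c + (misclassified r (x (Fin.last K)) -
        misclassified r (Function.update x m c (Fin.last K)))) :=
    mul_le_mul_of_nonneg_left (by linarith) (segArea_sides_pos hr).le
  simp only [potential, segTotal]
  push_cast at hS ⊢
  linear_combination htri + hseg + triArea (sides K r) * hT + segArea (sides K r) * hS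

noncomputable def survivor (r : ℕ) (x y : Solution K) : Solution K :=
  if fitness r x ≤ fitness r y then y else x

theorem step_eq_map_survivor (off : Solution K → PMF (Solution K)) (x : Solution K) :
    step r off x = (off x).map (survivor r x) :=
  rfl

theorem potential_survivor_le (hr : 0 < r) (x y : Solution K) :
    potential r (survivor r x y) ≤ potential r x := by
  unfold survivor
  split_ifs with h
  exacts [(fitness_le_fitness_iff hr).1 h, le_rfl]

noncomputable def improvement (r : ℕ) (x y : Solution K) : ℝ≥0∞ :=
  ENNReal.ofReal (potential r x) - ENNReal.ofReal (potential r (survivor r x y))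

theorem ofReal_le_improvement (hr : 2 ≤ r) {x y : Solution K} {t : ℝ}
    (h : potential r y + t ≤ potential r x) : ENNReal.ofReal t ≤ improvement r x y := by
  rcases le_or_gt t 0 with ht | ht
  · simp [ENNReal.ofReal_of_nonpos ht]
  rw [improvement, survivor, if_pos ((fitness_le_fitness_iff (by omega)).2 (by linarith)),
    ← ENNReal.ofReal_sub _ (potential_nonneg hr y)]
  exact ENNReal.ofReal_le_ofReal (by linarith)

noncomputable def cellPotential (r : ℕ) (x : Solution K) (m : Fin (K + 1)) : ℝ :=
  triArea (sides K r) * triDeficit r (x m) + segArea (sides K r) * segDeficit r (x m) +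
    if m = Fin.last K then segArea (sides K r) * misclassified r (x m) else 0

theorem sum_cellPotential (r : ℕ) (x : Solution K) : ∑ m, cellPotential r x m = potential r x := by
  simp only [cellPotential, potential, triTotal, segTotal, Finset.sum_add_distrib,
    Finset.sum_ite_eq', Finset.mem_univ, if_true, ← Finset.mul_sum]
  push_cast
  ring

theorem cellPotential_nonneg (hr : 2 ≤ r) (x : Solution K) (m : Fin (K + 1)) :
    0 ≤ cellPotential r x m := by
  have := segArea_sides_pos (K := K) hr
  have := triArea_sides_pos (K := K) hr
  rw [cellPotential]
  split_ifs <;> positivity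

theorem ofReal_triDeficit_le_improvement_addC (hr : 2 ≤ r) (x : Solution K) (m : Fin (K + 1)) :
    ENNReal.ofReal (triArea (sides K r) * (triDeficit r (x m) / (2 * r))) ≤
      improvement r x (Function.update x m (addC (x m))) := by
  obtain ⟨hT, hS, hM⟩ := deficits_addC r (x m)
  refine ofReal_le_improvement hr ?_
  simpa using potential_update_add_le hr x m (addC (x m)) (i := triDeficit r (x m) / (2 * r))
    (j := 0) (e := 0)
    (by rw [hT]; exact natCast_sub_one_add_div_le (by exact_mod_cast Nat.sub_le _ _))
    (by simp [hS]) (by simpa using misclassified_update_last_le hM)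

theorem ofReal_segDeficit_le_improvement_addA (hr : 2 ≤ r) (x : Solution K) (m : Fin (K + 1)) :
    ENNReal.ofReal (segArea (sides K r) * (segDeficit r (x m) / (2 * r))) ≤
      improvement r x (Function.update x m (addA (x m))) := by
  obtain ⟨hT, hS, hM⟩ := deficits_addA r (x m)
  refine ofReal_le_improvement hr ?_
  simpa using potential_update_add_le hr x m (addA (x m)) (i := 0)
    (j := segDeficit r (x m) / (2 * r)) (e := 0) (by simp [hT])
    (by rw [hS]; exact natCast_sub_one_add_div_le (by exact_mod_cast Nat.sub_le _ _))
    (by simpa using misclassified_update_last_le hM.le)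

theorem ofReal_misclassified_le_improvement_moveBC (hr : 2 ≤ r) (x : Solution K) :
    ENNReal.ofReal (segArea (sides K r) * (misclassified r (x (Fin.last K)) / (2 * r))) ≤
      improvement r x (Function.update x (Fin.last K) (moveBC (x (Fin.last K)))) := by
  rcases Nat.eq_zero_or_pos (misclassified r (x (Fin.last K))) with h0 | h0
  · simp [h0]
  obtain ⟨hT, hS, hM⟩ := deficits_moveBC h0
  have hM2 : (misclassified r (x (Fin.last K)) : ℝ) ≤ 2 * r := by
    exact_mod_cast (misclassified_le r _).trans (by omega)
  refine ofReal_le_improvement hr ?_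
  simpa using potential_update_add_le hr x (Fin.last K) (moveBC (x (Fin.last K))) (i := 0)
    (j := 0) (e := misclassified r (x (Fin.last K)) / (2 * r)) (by simp [hT]) (by simp [hS])
    (by rw [Function.update_self, hM]; exact natCast_sub_one_add_div_le hM2)

theorem ofReal_cellPotential_div_le (hr : 2 ≤ r) (x : Solution K) (m : Fin (K + 1)) :
    ENNReal.ofReal (cellPotential r x m / (2 * r)) ≤
      improvement r x (Function.update x m (addC (x m))) +
        improvement r x (Function.update x m (addA (x m))) +
          improvement r x (Function.update x m (moveBC (x m))) := by
  rw [cellPotential, add_div, add_div, mul_div_assoc, mul_div_assoc]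
  refine ENNReal.ofReal_add_le.trans (add_le_add (ENNReal.ofReal_add_le.trans (add_le_add
    (ofReal_triDeficit_le_improvement_addC hr x m) (ofReal_segDeficit_le_improvement_addA hr x m)))
    ?_)
  split_ifs with hm
  · subst hm
    rw [mul_div_assoc]
    exact ofReal_misclassified_le_improvement_moveBC hr x
  · simp

theorem tsum_mutateCellOnce_mul_ge (c : Cell) (φ : Cell → ℝ≥0∞) :
    3⁻¹ * 3⁻¹ * (φ (addC c) + φ (addA c) + 2⁻¹ * φ (moveBC c)) ≤
      ∑' d, mutateCellOnce c d * φ d := by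
  simp only [mutateCellOnce, PMF.tsum_bind_mul, tsum_fintype, Fin.sum_univ_three,
    PMF.uniformOfFintype_apply, PMF.tsum_pure_mul, PMF.uniformOfFinset_apply, Fintype.card_fin,
    Finset.mem_erase, Finset.mem_univ, Finset.card_erase_of_mem, Finset.card_univ, Fin.reduceEq,
    reduceIte, ne_eq, not_false_eq_true, and_true, not_true_eq_false, Nat.cast_ofNat,
    Nat.reduceSub]
  -- the branches (A, Addition), (B, Modification into C) and (C, Addition)
  calc _ = 3⁻¹ * (3⁻¹ * φ (addA c) + 0 + 0) +
        3⁻¹ * (0 + 0 + 3⁻¹ * (0 + 0 + 2⁻¹ * φ (moveBC c))) + 3⁻¹ * (3⁻¹ * φ (addC c) + 0 + 0) := by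
        ring
    _ ≤ _ := by gcongr <;> first | exact zero_le | exact le_rfl

theorem tsum_innerMutate_mul_ge (inner : Bool) (c : Cell) (φ : Cell → ℝ≥0∞) :
    54⁻¹ * (φ (addC c) + φ (addA c) + φ (moveBC c)) ≤ ∑' d, innerMutate inner c d * φ d := by
  have h54 : (54 : ℝ≥0∞)⁻¹ = 3⁻¹ * (3⁻¹ * 3⁻¹ * 2⁻¹) := by
    simp only [← mul_assoc]
    rw [← ENNReal.mul_inv (by simp) (by simp), ← ENNReal.mul_inv (by simp) (by simp),
      ← ENNReal.mul_inv (by simp) (by simp)]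
    norm_num
  have hhalf : ∀ a : ℝ≥0∞, 2⁻¹ * a ≤ a := fun a => mul_le_of_le_one_left' (by norm_num)
  have hlow : 54⁻¹ * (φ (addC c) + φ (addA c) + φ (moveBC c)) ≤
      3⁻¹ * (3⁻¹ * 3⁻¹ * (φ (addC c) + φ (addA c) + 2⁻¹ * φ (moveBC c))) := calc
    _ = 3⁻¹ * (3⁻¹ * 3⁻¹ * (2⁻¹ * φ (addC c) + 2⁻¹ * φ (addA c) + 2⁻¹ * φ (moveBC c))) := by
      rw [h54]; ring
    _ ≤ _ := by gcongr <;> apply hhalf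
  refine hlow.trans ?_
  cases inner
  · exact (mul_le_of_le_one_left' (by norm_num)).trans (tsum_mutateCellOnce_mul_ge c φ)
  · have hone : ∑' d, mutateCellTimes 1 c d * φ d = ∑' d, mutateCellOnce c d * φ d := by
      simp only [mutateCellTimes, PMF.tsum_bind_mul, PMF.tsum_pure_mul]
    rw [innerMutate, if_pos rfl, PMF.tsum_bind_mul]
    calc _ ≤ ProbabilityTheory.poissonPMF 1 1 * ∑' d, mutateCellTimes 1 c d * φ d := by
          rw [hone]; gcongr
          · exact inv_three_le_poissonPMF_one_one
          · exact tsum_mutateCellOnce_mul_ge c φ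
      _ ≤ _ := ENNReal.le_tsum 1

noncomputable def driftRate (K r : ℕ) : ℝ := (108 * r * (K + 1))⁻¹

theorem driftRate_pos (hr : 0 < r) : 0 < driftRate K r := by
  rw [driftRate]; positivity

theorem driftRate_le_one (hr : 2 ≤ r) : driftRate K r ≤ 1 :=
  inv_le_one_of_one_le₀ (by nlinarith [(show (2 : ℝ) ≤ r by exact_mod_cast hr)])

theorem ofReal_mul_potential_le_tsum_improvement (hr : 2 ≤ r) (inner : Bool) (x : Solution K) :
    ENNReal.ofReal (driftRate K r * potential r x) ≤
      ∑' y, offspringOneBit inner x y * improvement r x y := by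
  simp only [offspringOneBit, PMF.tsum_bind_mul, tsum_fintype, PMF.uniformOfFintype_apply,
    Fintype.card_fin, PMF.tsum_pure_mul]
  rw [← sum_cellPotential, Finset.mul_sum, ENNReal.ofReal_sum_of_nonneg
    fun m _ => mul_nonneg (driftRate_pos (K := K) (show 0 < r by omega)).le (cellPotential_nonneg hr x m)]
  gcongr with m
  have hr0 : (0 : ℝ) < r := by exact_mod_cast (show 0 < r by omega)
  calc ENNReal.ofReal (driftRate K r * cellPotential r x m)
      = ((K + 1 : ℕ) : ℝ≥0∞)⁻¹ * (54⁻¹ * ENNReal.ofReal (cellPotential r x m / (2 * r))) := by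
        rw [← ENNReal.ofReal_natCast, ← ENNReal.ofReal_ofNat 54,
          ← ENNReal.ofReal_inv_of_pos (by positivity), ← ENNReal.ofReal_inv_of_pos (by norm_num),
          ← ENNReal.ofReal_mul (by norm_num), ← ENNReal.ofReal_mul (by positivity)]
        congr 1
        rw [driftRate]
        push_cast
        field_simp
        ring
    _ ≤ _ := by
        gcongr
        refine le_trans ?_
          (tsum_innerMutate_mul_ge inner (x m) fun c => improvement r x (Function.update x m c))
        gcongr
        exact ofReal_cellPotential_div_le hr x m

theorem tsum_step_mul_potential_le (hr : 2 ≤ r) (inner : Bool) (x : Solution K) :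
    ∑' y, step r (offspringOneBit inner) x y * ENNReal.ofReal (potential r y) ≤
      ENNReal.ofReal (1 - driftRate K r) * ENNReal.ofReal (potential r x) := by
  rw [step_eq_map_survivor, PMF.tsum_map_mul,
    ← ENNReal.ofReal_mul (by linarith [driftRate_le_one (K := K) hr]),
    show (1 - driftRate K r) * potential r x = potential r x - driftRate K r * potential r x by ring,
    ENNReal.ofReal_sub _ (mul_nonneg (driftRate_pos (K := K) (show 0 < r by omega)).le (potential_nonneg hr x))]
  exact PMF.tsum_mul_le_sub_of_le_tsum_mul_sub ENNReal.ofReal_ne_top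
    (fun y => ENNReal.ofReal_le_ofReal (potential_survivor_le (by omega) x y))
    (ofReal_mul_potential_le_tsum_improvement hr inner x)

theorem expectedRuntime_offspringOneBit_le (hr : 2 ≤ r) (inner : Bool) (init : PMF (Solution K)) :
    expectedRuntime r (offspringOneBit inner) init ≤
      ⌈log (π / segArea (sides K r)) / driftRate K r⌉₊ + (ENNReal.ofReal (driftRate K r))⁻¹ :=
  tsum_tsum_ite_le_of_multiplicative_drift (fun _ => rfl) (fun x => fitness r x = 1)
    (driftRate_pos (K := K) (show 0 < r by omega)) (driftRate_le_one hr) (segArea_sides_pos hr) (potential_le_pi hr)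
    (fun _ hx => segArea_le_potential hr (mt (fitness_eq_one_iff (by omega)).2 hx))
    (tsum_step_mul_potential_le hr inner)

theorem log_pi_div_segArea_sides_le (hr : 2 ≤ r) :
    log (π / segArea (sides K r)) ≤ 6 * log (r * (K + 2)) := by
  have hQ : (4 : ℝ) ≤ r * (K + 2) := by nlinarith [(show (2 : ℝ) ≤ r by exact_mod_cast hr)]
  have hratio : π / segArea (sides K r) ≤ sides K r ^ 3 := by
    rw [div_le_iff₀ (segArea_sides_pos hr)]
    exact pi_le_pow_three_mul_segArea (eight_le_sides hr)
  calc log (π / segArea (sides K r)) ≤ log (sides K r ^ 3) :=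
        log_le_log (div_pos pi_pos (segArea_sides_pos hr)) hratio
    _ = 3 * (log 2 + log (r * (K + 2))) := by
        rw [log_pow, sides_eq, mul_assoc, log_mul two_ne_zero (by positivity)]; push_cast; ring
    _ ≤ 6 * log (r * (K + 2)) := by
        linarith [log_le_log two_pos (show (2 : ℝ) ≤ r * (K + 2) by linarith)]

theorem ceil_add_inv_le_mul_log (hr : 2 ≤ r) :
    (⌈log (π / segArea (sides K r)) / driftRate K r⌉₊ : ℝ≥0∞) + (ENNReal.ofReal (driftRate K r))⁻¹ ≤
      ENNReal.ofReal (800 * r * (K + 2) * log (r * (K + 2))) := by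
  rw [driftRate]
  have hr2 : (2 : ℝ) ≤ r := by exact_mod_cast hr
  have hQ : (4 : ℝ) ≤ r * (K + 2) := by nlinarith
  have hD : (0 : ℝ) < 108 * r * (K + 1) := by positivity
  have hlogQ : 1 ≤ log (r * (K + 2)) := by
    rw [le_log_iff_exp_le (by positivity)]; linarith [exp_one_lt_d9]
  have hceil : (⌈log (π / segArea (sides K r)) / (108 * r * (K + 1) : ℝ)⁻¹⌉₊ : ℝ) ≤
      6 * log (r * (K + 2)) * (108 * r * (K + 1)) + 1 := by
    rw [div_inv_eq_mul]
    refine (Nat.cast_le.2 (Nat.ceil_mono (mul_le_mul_of_nonneg_right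
      (log_pi_div_segArea_sides_le hr) hD.le))).trans (Nat.ceil_lt_add_one ?_).le
    positivity
  rw [ENNReal.ofReal_inv_of_pos hD, inv_inv, ← ENNReal.ofReal_natCast,
    ← ENNReal.ofReal_add (Nat.cast_nonneg _) hD.le]
  refine ENNReal.ofReal_le_ofReal ?_
  have hK : (0 : ℝ) ≤ K := K.cast_nonneg
  nlinarith [mul_le_mul_of_nonneg_left hlogQ (show (0 : ℝ) ≤ r * (K + 2) by positivity)]

end ENAS

open ENAS in
/-- Theorem 1 (upper bound, one-bit): there is a constant `C > 0` such that for all `M ≥ 2`,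
`r ≥ 2`, every initialization parameter `s ≥ 1`, and both inner-level mutations, the
(1+1)-ENAS algorithm with one-bit outer-level mutation finds an optimal solution of `Mcc`
within expected runtime `E[T] ≤ C · r · M · ln(r M)`.  (There are `M - 1 = (M - 2) + 1`
cells, so the chain is instantiated with `K := M - 2`.) -/
theorem enas_onebit_upper_bound :
    ∃ C : ℝ, 0 < C ∧
      ∀ (M r s : ℕ), 2 ≤ M → 2 ≤ r → ∀ hs : 1 ≤ s, ∀ inner : Bool,
        expectedRuntime (K := M - 2) r (offspringOneBit inner) (initPMF (M - 2) s hs)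
          ≤ ENNReal.ofReal (C * r * M * Real.log (r * M)) := by
  refine ⟨800, by norm_num, fun M r s hM hr hs inner => ?_⟩
  have hM2 : ((M - 2 : ℕ) : ℝ) + 2 = M := by rw [Nat.cast_sub hM]; ring
  calc _ ≤ _ := expectedRuntime_offspringOneBit_le hr inner _
    _ ≤ _ := ceil_add_inv_le_mul_log hr
    _ = _ := by rw [hM2]
end

section
/- For all integers r ≥ 2 and M ≥ 2, with n = 2rM, one has (n − 2r)·(π/n − (1/2)·sin(2π/n)) < (1/2)·sin(2π/n). -/
/-!
With `x = 2π/n`, the claim `n · Ar_seg < Ar_tri` reads `2π (x - sin x) < x sin x`. The cubic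
Taylor bound `x - x³/6 < sin x` reduces this to `π x / 3 + x² / 6 ≤ 1`, which holds for
`x ≤ π/4`, i.e. `n ≥ 8`. Since `Ar_seg > 0`, replacing `n` by `n - 2r` only helps.
-/

open Real

noncomputable section

namespace RegularPolygon

def triArea (n : ℝ) : ℝ := (1 / 2) * sin (2 * π / n)

def segArea (n : ℝ) : ℝ := π / n - (1 / 2) * sin (2 * π / n)

theorem two_pi_mul_sub_sin_lt_mul_sin {x : ℝ} (hx₀ : 0 < x) (hx : x ≤ π / 4) :
    2 * π * (x - sin x) < x * sin x := by
  have hsin := sin_gt_sub_cube hx₀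
  have hquad : π * x / 3 + x ^ 2 / 6 ≤ 1 := by
    have hπ := pi_lt_d2
    have hx' : x ≤ 3.15 / 4 := by linarith
    nlinarith
  calc 2 * π * (x - sin x) < 2 * π * (x ^ 3 / 6) := by gcongr; linarith
    _ = x ^ 2 * (π * x / 3) := by ring
    _ ≤ x ^ 2 * (1 - x ^ 2 / 6) := by gcongr; linarith
    _ = x * (x - x ^ 3 / 6) := by ring
    _ < x * sin x := by gcongr

theorem segArea_pos {n : ℝ} (hn : 0 < n) : 0 < segArea n := by
  have hsin := sin_lt (show 0 < 2 * π / n by positivity)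
  have : π / n = (1 / 2) * (2 * π / n) := by ring
  unfold segArea
  linarith

theorem mul_segArea_lt_triArea {n : ℝ} (hn : 8 ≤ n) : n * segArea n < triArea n := by
  set x := 2 * π / n with hx_def
  have hn₀ : 0 < n := by linarith
  have hx₀ : 0 < x := by positivity
  have hx : x ≤ π / 4 := by
    rw [hx_def, div_le_div_iff₀ hn₀ four_pos]
    nlinarith [pi_pos]
  have hπ : π = n * x / 2 := by
    rw [hx_def]
    field_simp
  have key := two_pi_mul_sub_sin_lt_mul_sin hx₀ hx
  rw [hπ] at key
  have hseg : n * segArea n = n / 2 * (x - sin x) := by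
    unfold segArea
    rw [hπ]
    field_simp
  rw [hseg, triArea, ← hx_def]
  nlinarith

end RegularPolygon

end

open RegularPolygon in
/-- For all integers `r ≥ 2` and `M ≥ 2`, with `n = 2rM`, one has
`(n − 2r)·(π/n − (1/2)·sin(2π/n)) < (1/2)·sin(2π/n)`, i.e. `(n − 2r)·Ar_seg < Ar_tri`. -/
theorem seg_area_sum_lt_tri_area (r M : ℕ) (hr : 2 ≤ r) (hM : 2 ≤ M) :
    (2 * (r : ℝ) * (M : ℝ) - 2 * (r : ℝ))
        * (Real.pi / (2 * (r : ℝ) * (M : ℝ))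
            - (1 / 2) * Real.sin (2 * Real.pi / (2 * (r : ℝ) * (M : ℝ))))
      < (1 / 2) * Real.sin (2 * Real.pi / (2 * (r : ℝ) * (M : ℝ))) := by
  have hr' : (2 : ℝ) ≤ r := by exact_mod_cast hr
  have hM' : (2 : ℝ) ≤ M := by exact_mod_cast hM
  have hn : (8 : ℝ) ≤ 2 * r * M := by nlinarith
  have hseg := segArea_pos (show (0 : ℝ) < 2 * r * M by linarith)
  calc (2 * (r : ℝ) * M - 2 * r) * segArea (2 * r * M)
      ≤ 2 * r * M * segArea (2 * r * M) := by gcongr; linarith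
    _ < triArea (2 * r * M) := mul_segArea_lt_triArea hn
end
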